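/- Let δ be a positive integer and let t₁ = t[i₁..j₁] and t₂ = t[i₂..j₂] be distinct cubic runs of a string t with i₁ ≤ i₂, whose minimal periods p₁ and p₂ both satisfy 2δ ≤ p₁ ≤ 3δ and 2δ ≤ p₂ ≤ 3δ. Then i₂ − i₁ > δ. -/
import Mathlib


/-- `p` is a period of the substring `t[i..j]` of the 1-indexed string `t`:
`1 ≤ p ≤ |t[i..j]| = j - i + 1`, and `t[k] = t[k + p]` whenever both positions
lie in `[i..j]` (vacuously, the length is always a period). -/
def IsPeriodOf {α : Type*} (t : ℕ → α) (i j p : ℕ) : Prop :=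
  1 ≤ p ∧ p ≤ j + 1 - i ∧ ∀ k, i ≤ k → k + p ≤ j → t (k + p) = t k

/-- The minimal period of the substring `t[i..j]`. -/
noncomputable def minPeriod {α : Type*} (t : ℕ → α) (i j : ℕ) : ℕ :=
  sInf {p | IsPeriodOf t i j p}

/-- `t[i..j]` is a run of the string `t[1..n]`: its exponent is at least `2`
(i.e. `j - i + 1 ≥ 2 · minPeriod`), and the extensions `t[i-1..j]` (if `i > 1`)
and `t[i..j+1]` (if `j < n`) have strictly larger minimal periods. -/
def IsRun {α : Type*} (t : ℕ → α) (n i j : ℕ) : Prop :=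
  1 ≤ i ∧ i ≤ j ∧ j ≤ n ∧
  2 * minPeriod t i j ≤ j + 1 - i ∧
  (1 < i → minPeriod t i j < minPeriod t (i - 1) j) ∧
  (j < n → minPeriod t i j < minPeriod t i (j + 1))

/-- A cubic run is a run of exponent at least `3`. -/
def IsCubicRun {α : Type*} (t : ℕ → α) (n i j : ℕ) : Prop :=
  IsRun t n i j ∧ 3 * minPeriod t i j ≤ j + 1 - i

lemma isPeriodOf_length {α : Type*} (t : ℕ → α) {i j : ℕ} (h : i ≤ j) :
    IsPeriodOf t i j (j + 1 - i) := by
  refine ⟨by omega, le_refl _, fun k hk hkp => ?_⟩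
  exfalso; omega

lemma minPeriod_isPeriod {α : Type*} (t : ℕ → α) {i j : ℕ} (h : i ≤ j) :
    IsPeriodOf t i j (minPeriod t i j) := by
  have h0 : (j + 1 - i) ∈ {p | IsPeriodOf t i j p} := by
    simp only [Set.mem_setOf_eq]; exact isPeriodOf_length t h
  exact Nat.sInf_mem ⟨_, h0⟩

lemma minPeriod_le {α : Type*} (t : ℕ → α) {i j p : ℕ} (h : IsPeriodOf t i j p) :
    minPeriod t i j ≤ p := by
  apply Nat.sInf_le
  simp only [Set.mem_setOf_eq]; exact h

/-- Subtraction lemma: if `[a,b]` has periods `p < q` and length at least `p+q`,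
then it has period `q - p`. -/
lemma period_sub {α : Type*} (t : ℕ → α) {a b p q : ℕ}
    (hp : ∀ k, a ≤ k → k + p ≤ b → t (k + p) = t k)
    (hq : ∀ k, a ≤ k → k + q ≤ b → t (k + q) = t k)
    (hpq : p < q) (hlen : a + p + q ≤ b + 1) :
    ∀ k, a ≤ k → k + (q - p) ≤ b → t (k + (q - p)) = t k := by
  intro k hk hkb
  by_cases h : k + q ≤ b
  · have h1 := hq k hk h
    have h2 := hp (k + q - p) (by omega) (by omega)
    have e2 : k + q - p + p = k + q := by omega
    rw [e2] at h2
    have e : k + (q - p) = k + q - p := by omega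
    rw [e, ← h2, h1]
  · have h1 := hp (k - p) (by omega) (by omega)
    have h2 := hq (k - p) (by omega) (by omega)
    have e1 : k - p + p = k := by omega
    have e2 : k - p + q = k + (q - p) := by omega
    rw [e1] at h1
    rw [e2] at h2
    rw [h2, ← h1]

/-- Gluing: two overlapping `p`-periodic segments with overlap of length ≥ `p`
give a `p`-periodic union. -/
lemma period_glue {α : Type*} (t : ℕ → α) {a b c d p : ℕ}
    (h1 : ∀ k, a ≤ k → k + p ≤ b → t (k + p) = t k)
    (h2 : ∀ k, c ≤ k → k + p ≤ d → t (k + p) = t k)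
    (hov : c + p ≤ b + 1) :
    ∀ k, a ≤ k → k + p ≤ max b d → t (k + p) = t k := by
  intro k hk hkd
  by_cases h : k + p ≤ b
  · exact h1 k hk h
  · rcases le_max_iff.mp hkd with h' | h'
    · exact h1 k hk h'
    · exact h2 k (by omega) h'

lemma step_up {α : Type*} (t : ℕ → α) {a b P : ℕ}
    (hP : ∀ k, a ≤ k → k + P ≤ b → t (k + P) = t k) :
    ∀ m k, a ≤ k → k + m * P ≤ b → t (k + m * P) = t k := by
  intro m
  induction m with
  | zero => intro k _ _; simp
  | succ m ih =>
    intro k hk hkb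
    have e : k + (m + 1) * P = (k + P) + m * P := by ring
    rw [e] at hkb ⊢
    rw [ih (k + P) (by omega) hkb, hP k hk (by omega)]

/-- Period propagation: if `[a,b]` has period `P` and contains a window
`[c,d]` of length ≥ `P + g` with period `g`, then `[a,b]` has period `g`. -/
lemma period_of_window {α : Type*} (t : ℕ → α) {a b c d P g : ℕ}
    (hac : a ≤ c) (hdb : d ≤ b) (hPpos : 0 < P)
    (hwin : c + P + g ≤ d + 1)
    (hP : ∀ k, a ≤ k → k + P ≤ b → t (k + P) = t k)
    (hgp : ∀ k, c ≤ k → k + g ≤ d → t (k + g) = t k) :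
    ∀ k, a ≤ k → k + g ≤ b → t (k + g) = t k := by
  intro k hk hkb
  by_cases hkc : c ≤ k
  · -- shift k down into the window
    have hdm := Nat.div_add_mod (k - c) P
    have hrP : (k - c) % P < P := Nat.mod_lt _ hPpos
    generalize hq : (k - c) / P = q at hdm
    generalize hr : (k - c) % P = r at hdm hrP
    have hlink : q * P = P * q := by ring
    have e1 : k = (c + r) + q * P := by omega
    have t1 : t k = t (c + r) := by
      rw [e1]
      exact step_up t hP q (c + r) (by omega) (by omega)
    have e2 : k + g = (c + r + g) + q * P := by omega
    have t2 : t (k + g) = t (c + r + g) := by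
      rw [e2]
      exact step_up t hP q (c + r + g) (by omega) (by omega)
    rw [t1, t2]
    exact hgp (c + r) (by omega) (by omega)
  · -- shift k up into the window
    have hdm := Nat.div_add_mod (c - k - 1) P
    have hrP : (c - k - 1) % P < P := Nat.mod_lt _ hPpos
    generalize hq : (c - k - 1) / P = q at hdm
    generalize hr : (c - k - 1) % P = r at hdm hrP
    have hlink : (q + 1) * P = P * q + P := by ring
    have hk'c : c ≤ k + (q + 1) * P := by omega
    have hk'u : k + (q + 1) * P ≤ c + P - 1 := by omega
    have t1 : t (k + (q + 1) * P) = t k :=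
      step_up t hP (q + 1) k hk (by omega)
    have t2 : t (k + g + (q + 1) * P) = t (k + g) :=
      step_up t hP (q + 1) (k + g) (by omega) (by omega)
    rw [← t1, ← t2]
    have e : k + g + (q + 1) * P = (k + (q + 1) * P) + g := by ring
    rw [e]
    exact hgp (k + (q + 1) * P) hk'c (by omega)

/-- Distinct cubic runs whose minimal periods both lie in `[2δ, 3δ]` have
starting positions more than `δ` apart. -/
theorem cubic_runs_starts_far_apart {α : Type*} (t : ℕ → α)
    (n δ i₁ j₁ i₂ j₂ : ℕ) (hδ : 0 < δ)
    (h₁ : IsCubicRun t n i₁ j₁) (h₂ : IsCubicRun t n i₂ j₂)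
    (hne : (i₁, j₁) ≠ (i₂, j₂)) (hle : i₁ ≤ i₂)
    (hp₁l : 2 * δ ≤ minPeriod t i₁ j₁) (hp₁u : minPeriod t i₁ j₁ ≤ 3 * δ)
    (hp₂l : 2 * δ ≤ minPeriod t i₂ j₂) (hp₂u : minPeriod t i₂ j₂ ≤ 3 * δ) :
    δ < i₂ - i₁ := by
  by_contra hcon
  push_neg at hcon
  obtain ⟨⟨hi₁, hij₁, hj₁n, hexp₁, hleft₁, hright₁⟩, hcube₁⟩ := h₁
  obtain ⟨⟨hi₂, hij₂, hj₂n, hexp₂, hleft₂, hright₂⟩, hcube₂⟩ := h₂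
  obtain ⟨hp₁pos, hp₁len, hper₁⟩ := minPeriod_isPeriod t hij₁
  obtain ⟨hp₂pos, hp₂len, hper₂⟩ := minPeriod_isPeriod t hij₂
  set p₁ := minPeriod t i₁ j₁ with hpd₁
  set p₂ := minPeriod t i₂ j₂ with hpd₂
  -- basic length facts
  have hlen₁ : i₁ + 3 * p₁ ≤ j₁ + 1 := by omega
  have hlen₂ : i₂ + 3 * p₂ ≤ j₂ + 1 := by omega
  -- the overlap [i₂, min j₁ j₂] has length ≥ p₁ + p₂
  have hov₁ : i₂ + p₁ + p₂ ≤ j₁ + 1 := by omega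
  have hov₂ : i₂ + p₁ + p₂ ≤ j₂ + 1 := by omega
  have hov : i₂ + p₁ + p₂ ≤ min j₁ j₂ + 1 := by omega
  have hminle₁ : min j₁ j₂ ≤ j₁ := min_le_left _ _
  have hminle₂ : min j₁ j₂ ≤ j₂ := min_le_right _ _
  -- both periods hold on the overlap
  have hw₁ : ∀ k, i₂ ≤ k → k + p₁ ≤ min j₁ j₂ → t (k + p₁) = t k :=
    fun k hk hkb => hper₁ k (by omega) (by omega)
  have hw₂ : ∀ k, i₂ ≤ k → k + p₂ ≤ min j₁ j₂ → t (k + p₂) = t k :=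
    fun k hk hkb => hper₂ k hk (by omega)
  rcases eq_or_ne p₁ p₂ with heq | hne'
  · -- equal periods: glue the two runs, contradict extendability / distinctness
    have hper₂' : ∀ k, i₂ ≤ k → k + p₁ ≤ j₂ → t (k + p₁) = t k := by
      rw [heq]; exact hper₂
    have hglue : ∀ k, i₁ ≤ k → k + p₁ ≤ max j₁ j₂ → t (k + p₁) = t k :=
      period_glue t hper₁ hper₂' (by omega)
    have hii : i₁ = i₂ := by
      by_contra hne2
      have h1i : 1 < i₂ := by omega
      have hgt := hleft₂ h1i
      have hmem : IsPeriodOf t (i₂ - 1) j₂ p₂ := by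
        refine ⟨hp₂pos, by omega, fun k hk hkb => ?_⟩
        rw [← heq]
        exact hglue k (by omega) (by omega)
      have := minPeriod_le t hmem
      omega
    have hjj : j₁ ≠ j₂ := fun h => hne (by rw [hii, h])
    rcases lt_or_gt_of_ne hjj with hlt | hgt2
    · have hgt := hright₁ (by omega)
      have hmem : IsPeriodOf t i₁ (j₁ + 1) p₁ := by
        refine ⟨hp₁pos, by omega, fun k hk hkb => ?_⟩
        exact hglue k hk (by omega)
      have := minPeriod_le t hmem
      omega
    · have hgt := hright₂ (by omega)
      have hmem : IsPeriodOf t i₂ (j₂ + 1) p₂ := by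
        refine ⟨hp₂pos, by omega, fun k hk hkb => ?_⟩
        rw [← heq]
        exact hglue k (by omega) (by omega)
      have := minPeriod_le t hmem
      omega
  · -- distinct periods: overlap gets period |p₁ - p₂| ≤ δ, propagate to run 2
    have hq : ∀ k, i₂ ≤ k → k + (max p₁ p₂ - min p₁ p₂) ≤ min j₁ j₂ →
        t (k + (max p₁ p₂ - min p₁ p₂)) = t k := by
      rcases lt_or_gt_of_ne hne' with hlt | hgt
      · have := period_sub t hw₁ hw₂ hlt (by omega)
        have e : max p₁ p₂ - min p₁ p₂ = p₂ - p₁ := by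
          rw [max_eq_right hlt.le, min_eq_left hlt.le]
        rw [e]; exact this
      · have := period_sub t hw₂ hw₁ hgt (by omega)
        have e : max p₁ p₂ - min p₁ p₂ = p₁ - p₂ := by
          rw [max_eq_left hgt.le, min_eq_right hgt.le]
        rw [e]; exact this
    set q := max p₁ p₂ - min p₁ p₂ with hqdef
    have hq1 : 1 ≤ q := by
      rcases lt_or_gt_of_ne hne' with h | h
      · rw [hqdef, max_eq_right h.le, min_eq_left h.le]; omega
      · rw [hqdef, max_eq_left h.le, min_eq_right h.le]; omega
    have hqδ : q ≤ δ := by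
      rcases lt_or_gt_of_ne hne' with h | h
      · rw [hqdef, max_eq_right h.le, min_eq_left h.le]; omega
      · rw [hqdef, max_eq_left h.le, min_eq_right h.le]; omega
    have hfull : ∀ k, i₂ ≤ k → k + q ≤ j₂ → t (k + q) = t k :=
      period_of_window t (le_refl i₂) hminle₂ (by omega)
        (by omega) hper₂ hq
    have hmem : IsPeriodOf t i₂ j₂ q := ⟨hq1, by omega, hfull⟩
    have := minPeriod_le t hmem
    omega
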